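/- For the Heston-type gauge-free stochastic volatility model with σ(a) = η constant, the change of variable s = √2·a/η (so a(s) = ηs/√2) turns the reduced 1D eigenvalue problem into a Schrödinger equation whose potential is J(s) = (−3 + 4Bs²η + s⁴η²(2A + k²(ρ²−1)))/(4s²); in particular J(s) = −3/(4s²) + (Bη)·1 + (const)·s², a 3D-oscillator (harmonic-plus-inverse-square) potential. -/

import Mathlib

/-!
With constant volatility every derivative of `σ` vanishes and `∂ₐ(a/σ) = 1/η`, so `Q(a) = Aa² + Bη`;
the map `s ↦ ηs/√2` is linear, so its Schwarzian derivative vanishes. What remains is a rational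
function of `a`, and `a² = η²s²/2` turns it into the stated harmonic-plus-inverse-square potential.
-/

noncomputable def schwarzian (f : ℝ → ℝ) (t : ℝ) : ℝ :=
  deriv (fun t => deriv (deriv f) t / deriv f t) t - (1/2) * (deriv (deriv f) t / deriv f t)^2

theorem schwarzian_eq_zero_of_hasDerivAt_const {f : ℝ → ℝ} {m : ℝ}
    (hf : ∀ t, HasDerivAt f m t) (t : ℝ) : schwarzian f t = 0 := by
  have hf' : deriv f = fun _ => m := funext fun t => (hf t).deriv
  simp [schwarzian, hf']

theorem const_vol_potential_eq (A B k ρ η s x : ℝ) (hη : η ≠ 0) (hs : s ≠ 0)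
    (hx : x ^ 2 = η ^ 2 * s ^ 2 / 2) :
    A * x^2 + B * η - k^2 * x^2 / 2 + (4 * x^4 * k^2 * ρ^2 - 3 * η^2) / (8 * x^2)
      = (-3 + 4 * B * s^2 * η + s^4 * η^2 * (2*A + k^2*(ρ^2 - 1))) / (4 * s^2) := by
  rw [show x ^ 4 = (x ^ 2) ^ 2 by ring, hx]
  field_simp
  ring

/-- Heston-type gauge-free model, σ(a) = η constant: with a(s) = ηs/√2, the
Liouville-transformed potential J(s) equals
(−3 + 4Bs²η + s⁴η²(2A + k²(ρ²−1)))/(4s²), a 3D-oscillator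
(harmonic-plus-inverse-square) potential. -/
theorem heston_potential (A B k ρ η : ℝ) (hη : 0 < η)
    (a σ J : ℝ → ℝ)
    (ha : ∀ s, a s = η * s / Real.sqrt 2)
    (hσ : ∀ x, σ x = η)
    (hJ : ∀ s, J s =
        (A * (a s)^2 + B * (σ (a s))^2 * deriv (fun x => x / σ x) (a s))
        - k^2 * (a s)^2 / 2
        + (4 * (a s)^4 * k^2 * ρ^2 - 3 * (σ (a s))^2
            + (a s)^2 * (deriv σ (a s))^2
            + 2 * (a s) * (σ (a s))
                * (deriv σ (a s) - (a s) * deriv (deriv σ) (a s)))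
          / (8 * (a s)^2)
        + (1/2) * (deriv (fun t => deriv (deriv a) t / deriv a t) s
            - (1/2) * (deriv (deriv a) s / deriv a s)^2)) :
    ∀ s : ℝ, 0 < s →
      J s = (-3 + 4 * B * s^2 * η + s^4 * η^2 * (2*A + k^2*(ρ^2 - 1))) / (4 * s^2)
      ∧ J s = -3 / (4 * s^2) + B * η + ((2*A + k^2*(ρ^2 - 1)) * η^2 / 4) * s^2 := by
  intro s hs
  obtain rfl : σ = fun _ => η := funext hσ
  have ha_deriv : ∀ t, HasDerivAt a (η / Real.sqrt 2) t := fun t => by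
    rw [show a = fun s => η / Real.sqrt 2 * s from funext fun s => by rw [ha]; ring]
    simpa using (hasDerivAt_id t).const_mul (η / Real.sqrt 2)
  have hJs : J s = A * (a s)^2 + B * η - k^2 * (a s)^2 / 2
      + (4 * (a s)^4 * k^2 * ρ^2 - 3 * η^2) / (8 * (a s)^2) := by
    have h := hJ s
    rw [← schwarzian, schwarzian_eq_zero_of_hasDerivAt_const ha_deriv] at h
    simp only [deriv_const', deriv_div_const, deriv_id''] at h
    rw [h]
    field_simp
    ring
  have ha_sq : a s ^ 2 = η ^ 2 * s ^ 2 / 2 := by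
    rw [ha, div_pow, Real.sq_sqrt zero_le_two, mul_pow]
  rw [hJs, const_vol_potential_eq A B k ρ η s (a s) hη.ne' hs.ne' ha_sq]
  refine ⟨rfl, ?_⟩
  field_simp
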